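/- arXiv:2511.17086 — 2 statements merged into one kernel-verified Lean document; each statement's English description precedes it below -/
import Mathlib

section
/- Let V be a real vector space of dimension 2m with complex structure J and two J-compatible positive symplectic forms ω and ω₁ written in a common J-adapted basis as ω = Σ_j e_j* ∧ Je_j* and ω₁ = Σ_j λ_j e_j* ∧ Je_j* with all λ_j > 0. Then for every integer k with 0 ≤ k ≤ m-1 there exists a positive J-(1,1) form ω^{(k)} = Σ_j μ_j^{(k)} e_j* ∧ Je_j* with all μ_j^{(k)} > 0 such that (ω^{(k)})^{m-1} = ω^{m-1-k} ∧ ω₁^{k}. -/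
/-!
The 2-forms `t j = e_j* ∧ Je_j*` commute and square to zero, so they generate a commutative
algebra in which a product of `n` positive combinations `∑ a_j t_j` is a positive combination of
the square-free monomials `t^U = ∏_{j ∈ U} t_j`, `#U = n`, and
`(∑ μ_j t_j)^n = n! ∑_U (∏_{j ∈ U} μ_j) t^U`. In degree `n = m - 1` the monomials are indexed by
the omitted index `j`, so writing `ω^(m-1-k) ∧ ω₁^k = (m-1)! ∑_j d_j t^{univ \ {j}}` with `d_j > 0`
it remains to solve `∏_{i ≠ j} μ_i = d_j`: take `μ_j = E / d_j` where `E^(m-1) = ∏_i d_i`.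
-/

open Finset
open scoped Nat

section SquareZero

variable {ι R A : Type*} [DecidableEq ι] [CommSemiring R] [CommSemiring A] [Algebra R A]
  {z : ι → A}

theorem mul_prod_eq_ite_of_mul_self_eq_zero (hz : ∀ j, z j * z j = 0) (j : ι) (U : Finset ι) :
    z j * ∏ i ∈ U, z i = if j ∈ U then 0 else ∏ i ∈ insert j U, z i := by
  split_ifs with hj
  · rw [← mul_prod_erase U z hj, ← mul_assoc, hz, zero_mul]
  · rw [prod_insert hj]

variable [Fintype ι]

theorem sum_smul_mul_sum_powersetCard (hz : ∀ j, z j * z j = 0) (a : ι → R)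
    (c : Finset ι → R) (n : ℕ) :
    (∑ j, a j • z j) * ∑ U ∈ powersetCard n univ, c U • ∏ i ∈ U, z i =
      ∑ U ∈ powersetCard (n + 1) univ, (∑ j ∈ U, a j * c (U.erase j)) • ∏ i ∈ U, z i := by
  calc (∑ j, a j • z j) * ∑ U ∈ powersetCard n univ, c U • ∏ i ∈ U, z i
      = ∑ j, ∑ U ∈ powersetCard n univ with j ∉ U, (a j * c U) • ∏ i ∈ insert j U, z i := by
        simp only [sum_mul, mul_sum, smul_mul_smul_comm, mul_prod_eq_ite_of_mul_self_eq_zero hz,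
          sum_filter, smul_ite, smul_zero, ite_not]
        exact sum_comm
    _ = ∑ j, ∑ U ∈ powersetCard (n + 1) univ with j ∈ U, (a j * c (U.erase j)) • ∏ i ∈ U, z i := by
        refine sum_congr rfl fun j _ => sum_nbij' (insert j) (·.erase j) ?_ ?_ ?_ ?_ ?_ <;>
          intro U hU <;> simp only [mem_filter, mem_powersetCard, subset_univ, true_and] at hU
        · simp [card_insert_of_notMem hU.2, hU.1]
        · simp [card_erase_of_mem hU.2, hU.1]
        · exact erase_insert hU.2
        · exact insert_erase hU.2
        · rw [erase_insert hU.2]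
    _ = _ := by
        rw [sum_comm' (t' := powersetCard (n + 1) univ) (s' := fun U => U) (by simp [and_comm])]
        simp only [sum_smul]

theorem sum_smul_pow_eq_sum_powersetCard (hz : ∀ j, z j * z j = 0) (a : ι → R) (n : ℕ) :
    (∑ j, a j • z j) ^ n = ∑ U ∈ powersetCard n univ, (n ! * ∏ i ∈ U, a i) • ∏ i ∈ U, z i := by
  induction n with
  | zero => simp
  | succ n ih =>
    rw [pow_succ', ih, sum_smul_mul_sum_powersetCard hz]
    refine sum_congr rfl fun U hU => ?_
    have hterm : ∀ j ∈ U, a j * (n ! * ∏ i ∈ U.erase j, a i) = n ! * ∏ i ∈ U, a i := by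
      intro j hj
      rw [mul_left_comm, mul_prod_erase U a hj]
    rw [sum_congr rfl hterm, sum_const, (mem_powersetCard.1 hU).2, nsmul_eq_mul, Nat.factorial_succ]
    push_cast
    rw [mul_assoc]

end SquareZero

section PosExpansion

variable {ι A : Type*} [Fintype ι] (R : Type*) [CommSemiring R] [PartialOrder R]
  [IsStrictOrderedRing R] [CommSemiring A] [Algebra R A]

def HasPosExpansion (z : ι → A) (n : ℕ) (x : A) : Prop :=
  ∃ c : Finset ι → R, (∀ U ∈ powersetCard n univ, 0 < c U) ∧
    x = ∑ U ∈ powersetCard n univ, c U • ∏ i ∈ U, z i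

variable {R} {z : ι → A}

theorem hasPosExpansion_one : HasPosExpansion R z 0 1 :=
  ⟨fun _ => 1, fun _ _ => one_pos, by simp⟩

variable [DecidableEq ι]

theorem HasPosExpansion.sum_smul_mul (hz : ∀ j, z j * z j = 0) {a : ι → R} (ha : ∀ j, 0 < a j)
    {n : ℕ} {x : A} (hx : HasPosExpansion R z n x) :
    HasPosExpansion R z (n + 1) ((∑ j, a j • z j) * x) := by
  obtain ⟨c, hc, rfl⟩ := hx
  refine ⟨fun U => ∑ j ∈ U, a j * c (U.erase j), fun U hU => ?_,
    sum_smul_mul_sum_powersetCard hz a c n⟩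
  obtain ⟨-, hUcard⟩ := mem_powersetCard.1 hU
  refine sum_pos (fun j hj => mul_pos (ha j) (hc _ ?_)) (card_pos.1 (by omega))
  simp [card_erase_of_mem hj, hUcard]

theorem HasPosExpansion.sum_smul_pow_mul (hz : ∀ j, z j * z j = 0) {a : ι → R}
    (ha : ∀ j, 0 < a j) {n : ℕ} {x : A} (hx : HasPosExpansion R z n x) (p : ℕ) :
    HasPosExpansion R z (p + n) ((∑ j, a j • z j) ^ p * x) := by
  induction p with
  | zero => simpa using hx
  | succ p ih =>
    rw [pow_succ', mul_assoc, Nat.succ_add]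
    exact ih.sum_smul_mul hz ha

end PosExpansion

section Roots

variable {ι : Type*} [Fintype ι] [DecidableEq ι]

theorem Finset.exists_eq_univ_erase_of_card_eq [Nonempty ι] {U : Finset ι}
    (hU : #U = Fintype.card ι - 1) : ∃ j, U = univ.erase j := by
  have hcompl : #Uᶜ = 1 := by
    rw [card_compl, hU]
    have := Fintype.card_pos (α := ι)
    omega
  obtain ⟨j, hj⟩ := card_eq_one.1 hcompl
  exact ⟨j, by rw [← compl_singleton, ← hj, compl_compl]⟩

theorem exists_pos_prod_eq_of_card_sub_one (hι : 1 < Fintype.card ι) (c : Finset ι → ℝ)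
    (hc : ∀ U ∈ powersetCard (Fintype.card ι - 1) univ, 0 < c U) :
    ∃ μ : ι → ℝ, (∀ j, 0 < μ j) ∧
      ∀ U ∈ powersetCard (Fintype.card ι - 1) univ, ∏ i ∈ U, μ i = c U := by
  have : Nonempty ι := Fintype.card_pos_iff.1 (by omega)
  set d : ι → ℝ := fun j => c (univ.erase j)
  have hd : ∀ j, 0 < d j := fun j => hc _ (by simp [card_erase_of_mem])
  set E := (∏ j, d j) ^ ((Fintype.card ι - 1 : ℕ) : ℝ)⁻¹
  have hprod_pos : 0 < ∏ j, d j := prod_pos fun j _ => hd j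
  have hE : E ^ (Fintype.card ι - 1) = ∏ j, d j :=
    Real.rpow_inv_natCast_pow hprod_pos.le (by omega)
  refine ⟨fun j => E / d j, fun j => div_pos (Real.rpow_pos_of_pos hprod_pos _) (hd j),
    fun U hU => ?_⟩
  obtain ⟨j, rfl⟩ := exists_eq_univ_erase_of_card_eq (mem_powersetCard.1 hU).2
  have hprod : ∏ i ∈ univ.erase j, d i ≠ 0 := (prod_pos fun i _ => hd i).ne'
  rw [prod_div_distrib, prod_const, card_erase_of_mem (mem_univ j), card_univ, hE,
    ← mul_prod_erase univ d (mem_univ j), mul_div_assoc, div_self hprod, mul_one]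

theorem HasPosExpansion.exists_pos_sum_smul_pow_eq {A : Type*} [CommSemiring A] [Algebra ℝ A]
    {z : ι → A} (hz : ∀ j, z j * z j = 0) (hι : 1 < Fintype.card ι) {x : A}
    (hx : HasPosExpansion ℝ z (Fintype.card ι - 1) x) :
    ∃ μ : ι → ℝ, (∀ j, 0 < μ j) ∧ (∑ j, μ j • z j) ^ (Fintype.card ι - 1) = x := by
  obtain ⟨c, hc, rfl⟩ := hx
  set n := Fintype.card ι - 1
  obtain ⟨μ, hμ, hprod⟩ := exists_pos_prod_eq_of_card_sub_one hι (fun U => c U / n !)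
    fun U hU => div_pos (hc U hU) (by positivity)
  refine ⟨μ, hμ, ?_⟩
  rw [sum_smul_pow_eq_sum_powersetCard hz]
  refine sum_congr rfl fun U hU => ?_
  rw [hprod U hU, mul_div_cancel₀ _ (by positivity)]

open scoped IsMulCommutative in
theorem exists_pos_sum_smul_pow_eq_pow_mul_pow {A : Type*} [Semiring A] [Algebra ℝ A] {t : ι → A}
    (ht : ∀ j, t j * t j = 0) (hcomm : ∀ i j, Commute (t i) (t j)) {lam : ι → ℝ}
    (hlam : ∀ j, 0 < lam j) {a k : ℕ} (hak : a + k = Fintype.card ι - 1) :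
    ∃ μ : ι → ℝ, (∀ j, 0 < μ j) ∧
      (∑ j, μ j • t j) ^ (Fintype.card ι - 1) = (∑ j, t j) ^ a * (∑ j, lam j • t j) ^ k := by
  rcases le_or_gt (Fintype.card ι) 1 with hι | hι
  · refine ⟨fun _ => 1, fun _ => one_pos, ?_⟩
    obtain ⟨rfl, rfl⟩ : a = 0 ∧ k = 0 := by omega
    simp [Nat.sub_eq_zero_of_le hι]
  -- `Finset.prod` needs commutativity, so we work in the subalgebra generated by the `t j`.
  have : IsMulCommutative (Algebra.adjoin ℝ (Set.range t)) :=
    Algebra.isMulCommutative_adjoin ℝ (by rintro _ ⟨i, rfl⟩ _ ⟨j, rfl⟩; exact hcomm i j)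
  set z : ι → Algebra.adjoin ℝ (Set.range t) := fun j => ⟨t j, Algebra.subset_adjoin ⟨j, rfl⟩⟩
  have hz : ∀ j, z j * z j = 0 := fun j => Subtype.ext (ht j)
  have hx : HasPosExpansion ℝ z (Fintype.card ι - 1)
      ((∑ j, (1 : ℝ) • z j) ^ a * (∑ j, lam j • z j) ^ k) := by
    have := (hasPosExpansion_one.sum_smul_pow_mul hz hlam k).sum_smul_pow_mul hz
      (fun _ => one_pos) a
    rwa [mul_one, add_zero, hak] at this
  obtain ⟨μ, hμ, hpow⟩ := hx.exists_pos_sum_smul_pow_eq hz hι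
  refine ⟨μ, hμ, ?_⟩
  simpa using congrArg (Algebra.adjoin ℝ (Set.range t)).val hpow

end Roots

namespace ExteriorAlgebra

variable {R M : Type*} [CommRing R] [AddCommGroup M] [Module R M]

theorem commute_ι_mul_ι_ι (x y u : M) : Commute (ι R x * ι R y) (ι R u) := by
  have hswap : ∀ a b : M, ι R b * ι R a = -(ι R a * ι R b) :=
    fun a b => eq_neg_of_add_eq_zero_left (ι_add_mul_swap b a)
  show ι R x * ι R y * ι R u = ι R u * (ι R x * ι R y)
  rw [mul_assoc, hswap u y, mul_neg, ← mul_assoc, hswap u x, neg_mul, neg_neg, mul_assoc]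

theorem commute_ι_mul_ι (x y u v : M) : Commute (ι R x * ι R y) (ι R u * ι R v) :=
  (commute_ι_mul_ι_ι x y u).mul_right (commute_ι_mul_ι_ι x y v)

theorem ι_mul_ι_mul_self (x y : M) : ι R x * ι R y * (ι R x * ι R y) = 0 := by
  rw [← mul_assoc, (commute_ι_mul_ι_ι x y x).eq, ← mul_assoc, ι_sq_zero, zero_mul, zero_mul]

end ExteriorAlgebra

open ExteriorAlgebra

theorem stmt1_general (m : ℕ) (lam : Fin m → ℝ) (hlam : ∀ j, 0 < lam j)
    (k : ℕ) (hk : k ≤ m - 1) :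
    let W := (Fin m → ℝ) × (Fin m → ℝ)
    let estar : Fin m → ExteriorAlgebra ℝ W := fun j => ι ℝ (Pi.single j (1:ℝ), 0)
    let fstar : Fin m → ExteriorAlgebra ℝ W := fun j => ι ℝ (0, Pi.single j (1:ℝ))
    let ω : ExteriorAlgebra ℝ W := ∑ j : Fin m, estar j * fstar j
    let ω₁ : ExteriorAlgebra ℝ W := ∑ j : Fin m, lam j • (estar j * fstar j)
    ∃ μ : Fin m → ℝ, (∀ j, 0 < μ j) ∧
      (∑ j : Fin m, μ j • (estar j * fstar j)) ^ (m - 1) = ω ^ (m - 1 - k) * ω₁ ^ k := by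
  intro W estar fstar ω ω₁
  have hak : m - 1 - k + k = Fintype.card (Fin m) - 1 := by simp only [Fintype.card_fin]; omega
  simpa only [Fintype.card_fin] using
    exists_pos_sum_smul_pow_eq_pow_mul_pow (fun j => ι_mul_ι_mul_self _ _)
      (fun i j => commute_ι_mul_ι _ _ _ _) hlam hak

/-- With `ω = Σ_j e_j* ∧ Je_j*` and `ω₁ = Σ_j λ_j e_j* ∧ Je_j*`
(all `λ_j > 0`) two compatible positive forms written in a common J-adapted basis
(encoded in the exterior algebra over `W = (Fin m → ℝ) × (Fin m → ℝ)`),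
for every `0 ≤ k ≤ m-1` there is a positive J-(1,1) form
`ω⁽ᵏ⁾ = Σ_j μ_j e_j* ∧ Je_j*` with all `μ_j > 0` and `(ω⁽ᵏ⁾)^{m-1} = ω^{m-1-k} ∧ ω₁^k`. -/
theorem stmt1 (m : ℕ) (hm : 1 ≤ m) (lam : Fin m → ℝ) (hlam : ∀ j, 0 < lam j)
    (k : ℕ) (hk : k ≤ m - 1) :
    let W := (Fin m → ℝ) × (Fin m → ℝ)
    let estar : Fin m → ExteriorAlgebra ℝ W := fun j => ι ℝ (Pi.single j (1:ℝ), 0)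
    let fstar : Fin m → ExteriorAlgebra ℝ W := fun j => ι ℝ (0, Pi.single j (1:ℝ))
    let ω : ExteriorAlgebra ℝ W := ∑ j : Fin m, estar j * fstar j
    let ω₁ : ExteriorAlgebra ℝ W := ∑ j : Fin m, lam j • (estar j * fstar j)
    ∃ μ : Fin m → ℝ, (∀ j, 0 < μ j) ∧
      (∑ j : Fin m, μ j • (estar j * fstar j)) ^ (m - 1) = ω ^ (m - 1 - k) * ω₁ ^ k :=
  stmt1_general m lam hlam k hk
end

section
/- Let (V, J, ω) be a 2m-dimensional real vector space with compatible complex structure and symplectic form, m ≥ 2. If β is a real 3-form of type (1,2)+(2,1) and α is a real 1-form, then the 2m-form α ∧ Jβ ∧ ω^{m-2} equals -(Jα) ∧ β ∧ ω^{m-2}, i.e. only the J-invariant (2,2)-component of α ∧ Jβ contributes after wedging with ω^{m-2}, and J acting on the pair (α, β) changes the pairing by a sign. -/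
/-!
The complex structure `J` acts on the exterior algebra by an algebra automorphism, which on the
top degree `2m` is multiplication by `det J = iᵐ (-i)ᵐ = 1`. It fixes `ω`, and it squares to `-1`
on forms of type `(2,1)+(1,2)`. Hence
`α ∧ Jβ ∧ ωᵐ⁻² = J(α ∧ Jβ ∧ ωᵐ⁻²) = Jα ∧ J²β ∧ ωᵐ⁻² = -(Jα ∧ β ∧ ωᵐ⁻²)`.
-/

open ExteriorAlgebra

section

variable {R M N η κ : Type*} [CommRing R] [AddCommGroup M] [Module R M]
  [AddCommGroup N] [Module R N] [Fintype η] [Fintype κ]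

theorem AlternatingMap.compLinearMap_eq_prod_smul_of_basis_eigen (g : M [⋀^κ]→ₗ[R] N)
    (b : Module.Basis η R M) {f : M →ₗ[R] M} {c : η → R} (hf : ∀ i, f (b i) = c i • b i)
    (hκ : Fintype.card κ = Fintype.card η) :
    g.compLinearMap f = (∏ i, c i) • g := by
  refine b.ext_alternating fun w hw => ?_
  have hw' : Function.Bijective w := (Fintype.bijective_iff_injective_and_card w).2 ⟨hw, hκ⟩
  rw [compLinearMap_apply, smul_apply]
  simp only [hf]
  rw [g.map_smul_univ, Fintype.prod_bijective w hw' _ _ fun _ => rfl]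

theorem ExteriorAlgebra.map_eq_prod_smul_of_basis_eigen (b : Module.Basis η R M)
    {f : M →ₗ[R] M} {c : η → R} (hf : ∀ i, f (b i) = c i • b i) {x : ExteriorAlgebra R M}
    (hx : x ∈ ⋀[R]^(Fintype.card η) M) :
    map f x = (∏ i, c i) • x := by
  rw [← ιMulti_span_fixedDegree] at hx
  induction hx using Submodule.span_induction with
  | mem _ hv =>
    obtain ⟨v, rfl⟩ := hv
    rw [map_apply_ιMulti, ← AlternatingMap.smul_apply,
      ← (ιMulti R _).compLinearMap_eq_prod_smul_of_basis_eigen b hf (Fintype.card_fin _)]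
    rfl
  | zero => simp
  | add _ _ _ _ ha hb => rw [map_add, ha, hb, smul_add]
  | smul a _ _ h => rw [map_smul, h, smul_comm]

theorem ExteriorAlgebra.exteriorPower_one : ⋀[R]^1 M = LinearMap.range (ι R) :=
  pow_one _

theorem ExteriorAlgebra.map_mem_exteriorPower (f : M →ₗ[R] M) {n : ℕ} {x : ExteriorAlgebra R M}
    (hx : x ∈ ⋀[R]^n M) : map f x ∈ ⋀[R]^n M := by
  have : (⋀[R]^n M).map (map f).toLinearMap ≤ ⋀[R]^n M := by
    rw [Submodule.map_pow]
    refine pow_le_pow_left' ?_ n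
    rintro _ ⟨_, ⟨v, rfl⟩, rfl⟩
    exact ⟨f v, (map_apply_ι f v).symm⟩
  exact this ⟨x, hx, rfl⟩

theorem ExteriorAlgebra.mul_map_mul_eq_neg_map_mul_mul {f : M →ₗ[R] M} {n a b c : ℕ}
    (hn : a + b + c = n) (htop : ∀ x ∈ ⋀[R]^n M, map f x = x)
    {α β γ : ExteriorAlgebra R M} (hα : α ∈ ⋀[R]^a M) (hβ : β ∈ ⋀[R]^b M) (hγ : γ ∈ ⋀[R]^c M)
    (hββ : map f (map f β) = -β) (hγγ : map f γ = γ) :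
    α * map f β * γ = -(map f α * (β * γ)) := by
  have hdeg : α * map f β * γ ∈ ⋀[R]^n M :=
    hn ▸ SetLike.mul_mem_graded (SetLike.mul_mem_graded hα (map_mem_exteriorPower f hβ)) hγ
  calc α * map f β * γ = map f (α * map f β * γ) := (htop _ hdeg).symm
    _ = -(map f α * (β * γ)) := by rw [map_mul, map_mul, hββ, hγγ, mul_neg, neg_mul, mul_assoc]

end

section ComplexStructure

variable {U : Type*} [AddCommGroup U] [Module ℂ U]

variable (U) in
noncomputable def complexStructure : U × U →ₗ[ℂ] U × U :=
  LinearMap.prodMap (Complex.I • LinearMap.id) ((-Complex.I) • LinearMap.id)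

theorem complexStructure_mk_zero (u : U) :
    complexStructure U (u, 0) = Complex.I • (u, 0) := by
  simp [complexStructure]

theorem complexStructure_zero_mk (u : U) :
    complexStructure U (0, u) = (-Complex.I) • (0, u) := by
  simp [complexStructure]

theorem map_complexStructure_ι_mk_zero (u : U) :
    map (complexStructure U) (ι ℂ (u, 0)) = Complex.I • ι ℂ (u, 0) := by
  rw [map_apply_ι, complexStructure_mk_zero, map_smul]

theorem map_complexStructure_ι_zero_mk (u : U) :
    map (complexStructure U) (ι ℂ (0, u)) = (-Complex.I) • ι ℂ (0, u) := by
  rw [map_apply_ι, complexStructure_zero_mk, map_smul]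

theorem map_complexStructure_eq_self_of_mem_top {η : Type*} [Fintype η]
    (b : Module.Basis η ℂ U) {x : ExteriorAlgebra ℂ (U × U)}
    (hx : x ∈ ⋀[ℂ]^(2 * Fintype.card η) (U × U)) :
    map (complexStructure U) x = x := by
  have hJ : ∀ s, complexStructure U (b.prod b s) =
      Sum.elim (fun _ => Complex.I) (fun _ => -Complex.I) s • b.prod b s := by
    rintro (i | i)
    · simpa using complexStructure_mk_zero (b i)
    · simpa using complexStructure_zero_mk (b i)
  rw [two_mul, ← Fintype.card_sum] at hx
  rw [map_eq_prod_smul_of_basis_eigen (b.prod b) hJ hx, Fintype.prod_sum_type]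
  simp [← mul_pow]

end ComplexStructure

/-- Let `(V, J, ω)` be a `2m`-dimensional vector space with
compatible complex structure and symplectic form, `m ≥ 2`, encoded via the
complexified coframe `dz_1, …, dz_m, d̄z_1, …, d̄z_m` (so the complexified dual is
`W = (Fin m → ℂ) × (Fin m → ℂ)`, `ω = (√-1/2) Σ_j dz_j ∧ d̄z_j`, and `J` acts on
forms as the algebra extension of `J dz_j = √-1 dz_j`, `J d̄z_j = -√-1 d̄z_j`,
which on `k`-forms is `γ ↦ (-1)^k γ(J·,…,J·)`).  If `β` is a 3-form of type
`(1,2)+(2,1)` and `α` a 1-form, then `α ∧ Jβ ∧ ω^{m-2} = -(Jα) ∧ β ∧ ω^{m-2}`. -/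
theorem stmt14 (m : ℕ) (hm : 2 ≤ m) :
    let W := (Fin m → ℂ) × (Fin m → ℂ)
    let dz : Fin m → ExteriorAlgebra ℂ W := fun j => ι ℂ (Pi.single j (1:ℂ), 0)
    let dzb : Fin m → ExteriorAlgebra ℂ W := fun j => ι ℂ (0, Pi.single j (1:ℂ))
    let ω : ExteriorAlgebra ℂ W := (Complex.I / 2) • ∑ j : Fin m, dz j * dzb j
    let Jc : W →ₗ[ℂ] W :=
      LinearMap.prodMap (Complex.I • LinearMap.id) ((-Complex.I) • LinearMap.id)
    let Jmap := ExteriorAlgebra.map Jc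
    ∀ α β : ExteriorAlgebra ℂ W,
      α ∈ LinearMap.range (ι ℂ : W →ₗ[ℂ] ExteriorAlgebra ℂ W) →
      β ∈ Submodule.span ℂ {x : ExteriorAlgebra ℂ W |
          (∃ i j k, x = dz i * dz j * dzb k) ∨ (∃ i j k, x = dz i * dzb j * dzb k)} →
      α * Jmap β * ω ^ (m - 2) = -(Jmap α * (β * ω ^ (m - 2))) := by
  intro W dz dzb ω Jc Jmap α β hα hβ
  have hdz (j : Fin m) : Jmap (dz j) = Complex.I • dz j := map_complexStructure_ι_mk_zero _
  have hdzb (j : Fin m) : Jmap (dzb j) = (-Complex.I) • dzb j := map_complexStructure_ι_zero_mk _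
  have hι (w : W) : ι ℂ w ∈ ⋀[ℂ]^1 W := by
    rw [exteriorPower_one]; exact LinearMap.mem_range_self _ w
  have hβ3 : β ∈ ⋀[ℂ]^3 W := by
    refine Submodule.span_le.2 ?_ hβ
    rintro _ (⟨i, j, k, rfl⟩ | ⟨i, j, k, rfl⟩) <;>
      exact SetLike.mul_mem_graded (SetLike.mul_mem_graded (hι _) (hι _)) (hι _)
  have hω : ω ^ (m - 2) ∈ ⋀[ℂ]^((m - 2) • 2) W := by
    refine SetLike.pow_mem_graded _ (Submodule.smul_mem _ _ (Submodule.sum_mem _ fun j _ => ?_))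
    exact SetLike.mul_mem_graded (hι _) (hι _)
  have hJJβ : Jmap (Jmap β) = -β := by
    refine LinearMap.eqOn_span (f := Jmap.toLinearMap ∘ₗ Jmap.toLinearMap) (g := -LinearMap.id)
      ?_ hβ
    rintro _ (⟨i, j, k, rfl⟩ | ⟨i, j, k, rfl⟩) <;>
      simp [hdz, hdzb, smul_smul]
  have hJω : Jmap ω = ω := by
    simp [ω, hdz, hdzb, smul_smul]
  have htop (x) (hx : x ∈ ⋀[ℂ]^(2 * m) W) : Jmap x = x :=
    map_complexStructure_eq_self_of_mem_top (Pi.basisFun ℂ (Fin m)) (by simpa using hx)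
  refine mul_map_mul_eq_neg_map_mul_mul ?_ htop (by rwa [exteriorPower_one]) hβ3 hω hJJβ
    (by rw [map_pow, hJω])
  simp only [smul_eq_mul]
  omega
end
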